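/- For every κ ∈ (0,2) there exists a constant c > 0 such that the second derivative of the Rényi entropy function satisfies η_κ''(t) ≤ −c for all t ∈ (0,1). In particular, for κ ∈ (1,2) and p := κ − 1 ∈ (0,1), the function g_p(t) := p[t(1−t)]^{p−1} − [t^p − (1−t)^p]² satisfies g_p(t) ≥ (1 − M_p)·2^{1−p} > 0 for all t ∈ (0,1), where M_p := 2^{-p} if 0 < p < 1/2 and M_p := 2^{p−1} if 1/2 ≤ p < 1. -/

import Mathlib

noncomputable section

/-- The Rényi entropy function `η_κ` on `(0,1)` (extended by `0` elsewhere). -/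
def eta (κ : ℝ) (t : ℝ) : ℝ :=
  if t ∈ Set.Ioo (0 : ℝ) 1 then
    (if κ = 1 then -(t * Real.log t) - (1 - t) * Real.log (1 - t)
     else (1 - κ)⁻¹ * Real.log (t ^ κ + (1 - t) ^ κ))
  else 0

/-- `g_p(t) = p [t(1−t)]^{p−1} − [t^p − (1−t)^p]²`. -/
def gFun (p t : ℝ) : ℝ := p * (t * (1 - t)) ^ (p - 1) - (t ^ p - (1 - t) ^ p) ^ 2

/-- `M_p = 2^{-p}` for `0 < p < 1/2` and `M_p = 2^{p−1}` for `1/2 ≤ p < 1`. -/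
def Mconst (p : ℝ) : ℝ := if p < 1 / 2 then (2 : ℝ) ^ (-p) else (2 : ℝ) ^ (p - 1)

/-! The identity `η_κ'' · (t^κ + (1-t)^κ)² = κ/(1-κ) · g_{κ-1}(t)` reduces the first claim to
bounds on `g`, at the cost of a factor `4` since `t^κ + (1-t)^κ ≤ 2`. For `κ < 1`,
`g_{κ-1}(t) ≤ κ - 1` because `(t(1-t))^{κ-2} ≥ 1`; for `κ = 1`, `η₁'' = -1/(t(1-t)) ≤ -4`.
For `κ ∈ (1,2)`, put `s = t(1-t)` and write `g_p(t) = p s^{p-1} + 2 s^p - (t^{2p} + (1-t)^{2p})`.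
Bernoulli's inequality `(2s)^{1-p} ≤ p + (1-p)·2s` gives `p s^{p-1} + 2 s^p ≥ 2^{1-p}`, while
`t^{2p} + (1-t)^{2p}` is at most `2^{1-2p}` by concavity when `2p ≤ 1` and at most `1` when
`2p ≥ 1`; in both cases this is `M_p 2^{1-p}`. -/

open Real Set Filter Topology

lemma Mconst_lt_one {p : ℝ} (hp0 : 0 < p) (hp1 : p < 1) : Mconst p < 1 := by
  unfold Mconst
  split_ifs <;> exact rpow_lt_one_of_one_lt_of_neg one_lt_two (by linarith)

lemma Mconst_mul_two_rpow (p : ℝ) :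
    Mconst p * 2 ^ (1 - p) = if p < 1 / 2 then 2 ^ (1 - 2 * p) else 1 := by
  unfold Mconst
  split_ifs
  · rw [← rpow_add two_pos]; ring_nf
  · rw [← rpow_add two_pos]; simp

lemma rpow_add_one_sub_rpow_le_two_rpow {q t : ℝ} (hq0 : 0 ≤ q) (hq1 : q ≤ 1) (ht0 : 0 ≤ t)
    (ht1 : t ≤ 1) : t ^ q + (1 - t) ^ q ≤ 2 ^ (1 - q) := by
  have hmid := (concaveOn_rpow hq0 hq1).2 (mem_Ici.2 ht0) (mem_Ici.2 (sub_nonneg.2 ht1))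
    (by norm_num : (0 : ℝ) ≤ 1 / 2) (by norm_num : (0 : ℝ) ≤ 1 / 2) (by norm_num)
  have hhalf : (1 / 2 : ℝ) ^ q = 2 ^ (1 - q) / 2 := by
    rw [one_div, inv_rpow zero_le_two, rpow_sub two_pos, rpow_one]; ring
  simp only [smul_eq_mul, show (1 / 2 : ℝ) * t + 1 / 2 * (1 - t) = 1 / 2 by ring, hhalf] at hmid
  linarith

lemma rpow_add_one_sub_rpow_le_one {q t : ℝ} (hq : 1 ≤ q) (ht0 : 0 ≤ t) (ht1 : t ≤ 1) :
    t ^ q + (1 - t) ^ q ≤ 1 := by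
  simpa using add_rpow_le_rpow_add ht0 (sub_nonneg.2 ht1) hq

lemma sq_rpow_add_sq_rpow_le_Mconst_mul {p t : ℝ} (hp : 0 ≤ p) (ht0 : 0 ≤ t) (ht1 : t ≤ 1) :
    (t ^ p) ^ 2 + ((1 - t) ^ p) ^ 2 ≤ Mconst p * 2 ^ (1 - p) := by
  have hsq : ∀ x : ℝ, 0 ≤ x → (x ^ p) ^ 2 = x ^ (2 * p) := fun x hx => by
    rw [mul_comm, rpow_mul hx, rpow_two]
  rw [hsq t ht0, hsq (1 - t) (sub_nonneg.2 ht1), Mconst_mul_two_rpow]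
  split_ifs with h
  · exact rpow_add_one_sub_rpow_le_two_rpow (by positivity) (by linarith) ht0 ht1
  · exact rpow_add_one_sub_rpow_le_one (by linarith) ht0 ht1

lemma two_rpow_one_sub_le {p s : ℝ} (hp0 : 0 ≤ p) (hp1 : p ≤ 1) (hs : 0 < s) :
    2 ^ (1 - p) ≤ p * s ^ (p - 1) + 2 * s ^ p := by
  have hbern : (2 * s) ^ (1 - p) ≤ p + 2 * s := by
    have := rpow_one_add_le_one_add_mul_self (s := 2 * s - 1) (by linarith) (p := 1 - p)
      (by linarith) (by linarith)
    rw [add_sub_cancel] at this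
    nlinarith
  have hcancel : s ^ (1 - p) * s ^ (p - 1) = 1 := by
    rw [← rpow_add hs]; simp
  have hsp : s ^ p = s * s ^ (p - 1) := by
    conv_lhs => rw [show p = 1 + (p - 1) by ring, rpow_add hs, rpow_one]
  rw [mul_rpow zero_le_two hs.le] at hbern
  calc (2 : ℝ) ^ (1 - p) = 2 ^ (1 - p) * s ^ (1 - p) * s ^ (p - 1) := by
        rw [mul_assoc, hcancel, mul_one]
    _ ≤ (p + 2 * s) * s ^ (p - 1) := by gcongr
    _ = p * s ^ (p - 1) + 2 * s ^ p := by rw [hsp]; ring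

lemma one_sub_Mconst_mul_le_gFun {p t : ℝ} (hp0 : 0 ≤ p) (hp1 : p ≤ 1)
    (ht : t ∈ Ioo (0 : ℝ) 1) : (1 - Mconst p) * 2 ^ (1 - p) ≤ gFun p t := by
  have hs : 0 < t * (1 - t) := mul_pos ht.1 (sub_pos.2 ht.2)
  have hprod : (t * (1 - t)) ^ p = t ^ p * (1 - t) ^ p := mul_rpow ht.1.le (sub_pos.2 ht.2).le
  have hsq := sq_rpow_add_sq_rpow_le_Mconst_mul hp0 ht.1.le ht.2.le
  have hlin := two_rpow_one_sub_le hp0 hp1 hs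
  rw [gFun]
  nlinarith

lemma one_sub_Mconst_mul_pos {p : ℝ} (hp0 : 0 < p) (hp1 : p < 1) :
    0 < (1 - Mconst p) * 2 ^ (1 - p) :=
  mul_pos (sub_pos.2 (Mconst_lt_one hp0 hp1)) (by positivity)

section SecondDerivative

lemma deriv_deriv_eq_of_eqOn {f g g' : ℝ → ℝ} {g'' : ℝ} {U : Set ℝ} {t : ℝ} (hU : IsOpen U)
    (hfg : EqOn f g U) (hg : ∀ x ∈ U, HasDerivAt g (g' x) x) (ht : t ∈ U)
    (hg' : HasDerivAt g' g'' t) : deriv (deriv f) t = g'' := by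
  have hderiv : deriv f =ᶠ[𝓝 t] g' := eventually_of_mem (hU.mem_nhds ht) fun x hx =>
    (eventuallyEq_of_mem (hU.mem_nhds hx) hfg).deriv_eq.trans (hg x hx).deriv
  rw [hderiv.deriv_eq, hg'.deriv]

variable {q t : ℝ}

lemma hasDerivAt_one_sub_rpow (ht : t < 1) :
    HasDerivAt (fun y => (1 - y) ^ q) (-(q * (1 - t) ^ (q - 1))) t :=
  (((hasDerivAt_id' t).const_sub 1).rpow_const (Or.inl (sub_pos.2 ht).ne')).congr_deriv
    (by ring)

lemma hasDerivAt_rpow_add_one_sub_rpow (ht : t ∈ Ioo (0 : ℝ) 1) :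
    HasDerivAt (fun y => y ^ q + (1 - y) ^ q) (q * (t ^ (q - 1) - (1 - t) ^ (q - 1))) t :=
  ((hasDerivAt_rpow_const (Or.inl ht.1.ne')).add (hasDerivAt_one_sub_rpow ht.2)).congr_deriv
    (by ring)

lemma hasDerivAt_rpow_sub_one_sub_rpow (ht : t ∈ Ioo (0 : ℝ) 1) :
    HasDerivAt (fun y => y ^ q - (1 - y) ^ q) (q * (t ^ (q - 1) + (1 - t) ^ (q - 1))) t :=
  ((hasDerivAt_rpow_const (Or.inl ht.1.ne')).sub (hasDerivAt_one_sub_rpow ht.2)).congr_deriv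
    (by ring)

lemma rpow_add_one_sub_rpow_pos (ht : t ∈ Ioo (0 : ℝ) 1) : 0 < t ^ q + (1 - t) ^ q :=
  add_pos (rpow_pos_of_pos ht.1 q) (rpow_pos_of_pos (sub_pos.2 ht.2) q)

lemma rpow_add_one_sub_rpow_le_two (hq : 0 ≤ q) (ht : t ∈ Ioo (0 : ℝ) 1) :
    t ^ q + (1 - t) ^ q ≤ 2 := by
  have := rpow_le_one ht.1.le ht.2.le hq
  have := rpow_le_one (sub_pos.2 ht.2).le (sub_le_self 1 ht.1.le) hq
  linarith

/-- With `A = t^{κ-2}`, `B = (1-t)^{κ-2}` this is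
`(A + B)(A t² + B (1-t)²) = AB + (A t - B (1-t))²`, which holds because `t + (1 - t) = 1`. -/
lemma gFun_sub_one_eq (κ : ℝ) (ht : t ∈ Ioo (0 : ℝ) 1) :
    gFun (κ - 1) t = (κ - 1) * (t ^ (κ - 2) + (1 - t) ^ (κ - 2)) * (t ^ κ + (1 - t) ^ κ)
      - κ * (t ^ (κ - 1) - (1 - t) ^ (κ - 1)) ^ 2 := by
  have ht0 := ht.1
  have ht1 : 0 < 1 - t := sub_pos.2 ht.2
  have hsucc : ∀ x : ℝ, 0 < x → x ^ (κ - 1) = x ^ (κ - 2) * x := fun x hx => by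
    rw [← rpow_add_one hx.ne']; ring_nf
  have hsucc2 : ∀ x : ℝ, 0 < x → x ^ κ = x ^ (κ - 2) * x ^ 2 := fun x hx => by
    rw [← rpow_natCast, ← rpow_add hx]; norm_num
  rw [gFun, show κ - 1 - 1 = κ - 2 by ring, mul_rpow ht0.le ht1.le, hsucc t ht0, hsucc _ ht1,
    hsucc2 t ht0, hsucc2 _ ht1]
  ring

lemma deriv_deriv_eta_mul_sq {κ : ℝ} (hκ : κ ≠ 1) (ht : t ∈ Ioo (0 : ℝ) 1) :
    deriv (deriv (eta κ)) t * (t ^ κ + (1 - t) ^ κ) ^ 2 = κ / (1 - κ) * gFun (κ - 1) t := by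
  have hEq : EqOn (eta κ) (fun y => (1 - κ)⁻¹ * log (y ^ κ + (1 - y) ^ κ)) (Ioo 0 1) :=
    fun x hx => by simp only [eta, if_pos hx, if_neg hκ]
  have hD1 : ∀ x ∈ Ioo (0 : ℝ) 1, HasDerivAt (fun y => (1 - κ)⁻¹ * log (y ^ κ + (1 - y) ^ κ))
      ((1 - κ)⁻¹ * (κ * (x ^ (κ - 1) - (1 - x) ^ (κ - 1)) / (x ^ κ + (1 - x) ^ κ))) x :=
    fun x hx => ((hasDerivAt_rpow_add_one_sub_rpow hx).log
      (rpow_add_one_sub_rpow_pos hx).ne').const_mul _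
  have hD2 := (((hasDerivAt_rpow_sub_one_sub_rpow (q := κ - 1) ht).const_mul κ).div
    (hasDerivAt_rpow_add_one_sub_rpow (q := κ) ht) (rpow_add_one_sub_rpow_pos ht).ne').const_mul
    (1 - κ)⁻¹
  rw [deriv_deriv_eq_of_eqOn isOpen_Ioo hEq hD1 ht hD2, gFun_sub_one_eq κ ht,
    show κ - 1 - 1 = κ - 2 by ring]
  have := (rpow_add_one_sub_rpow_pos (q := κ) ht).ne'
  have : 1 - κ ≠ 0 := sub_ne_zero.2 (Ne.symm hκ)
  field_simp

lemma deriv_deriv_eta_one (ht : t ∈ Ioo (0 : ℝ) 1) :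
    deriv (deriv (eta 1)) t = -(t * (1 - t))⁻¹ := by
  have hEq : EqOn (eta 1) (fun y => -(y * log y) - (1 - y) * log (1 - y)) (Ioo 0 1) :=
    fun x hx => by simp only [eta, if_pos hx, if_true]
  have hD1 : ∀ x ∈ Ioo (0 : ℝ) 1, HasDerivAt (fun y => -(y * log y) - (1 - y) * log (1 - y))
      (log (1 - x) - log x) x := fun x hx =>
    ((hasDerivAt_mul_log hx.1.ne').neg.sub ((hasDerivAt_mul_log (sub_pos.2 hx.2).ne').comp x
      ((hasDerivAt_id' x).const_sub 1))).congr_deriv (by ring)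
  have hD2 := ((hasDerivAt_log (sub_pos.2 ht.2).ne').comp t ((hasDerivAt_id' t).const_sub 1)).sub
    (hasDerivAt_log ht.1.ne')
  rw [deriv_deriv_eq_of_eqOn isOpen_Ioo hEq hD1 ht hD2]
  have := ht.1.ne'
  have := (sub_pos.2 ht.2).ne'
  field_simp
  ring

end SecondDerivative

lemma le_neg_div_four_of_mul_sq_le {x y C : ℝ} (hy0 : 0 < y) (hy2 : y ≤ 2) (hC : 0 ≤ C)
    (h : x * y ^ 2 ≤ -C) : x ≤ -(C / 4) := by
  have hx : x ≤ 0 := by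
    by_contra! hx
    nlinarith [mul_pos hx (pow_pos hy0 2)]
  nlinarith [mul_le_mul_of_nonpos_left (pow_le_pow_left₀ hy0.le hy2 2) hx]

lemma deriv_deriv_eta_le {κ C t : ℝ} (hκ0 : 0 ≤ κ) (hκ1 : κ ≠ 1) (ht : t ∈ Ioo (0 : ℝ) 1)
    (hC : 0 ≤ C) (h : κ / (1 - κ) * gFun (κ - 1) t ≤ -C) :
    deriv (deriv (eta κ)) t ≤ -(C / 4) :=
  le_neg_div_four_of_mul_sq_le (rpow_add_one_sub_rpow_pos ht)
    (rpow_add_one_sub_rpow_le_two hκ0 ht) hC ((deriv_deriv_eta_mul_sq hκ1 ht).trans_le h)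

lemma deriv_deriv_eta_one_le {t : ℝ} (ht : t ∈ Ioo (0 : ℝ) 1) : deriv (deriv (eta 1)) t ≤ -4 := by
  have hs : 0 < t * (1 - t) := mul_pos ht.1 (sub_pos.2 ht.2)
  have hquarter : t * (1 - t) ≤ 1 / 4 := by nlinarith [sq_nonneg (2 * t - 1)]
  rw [deriv_deriv_eta_one ht, neg_le_neg_iff, le_inv_comm₀ four_pos hs]
  linarith

lemma gFun_le_of_nonpos {p t : ℝ} (hp : p ≤ 0) (ht : t ∈ Ioo (0 : ℝ) 1) : gFun p t ≤ p := by
  have hs : 0 < t * (1 - t) := mul_pos ht.1 (sub_pos.2 ht.2)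
  have hone : 1 ≤ (t * (1 - t)) ^ (p - 1) :=
    one_le_rpow_of_pos_of_le_one_of_nonpos hs (by nlinarith [ht.1, ht.2]) (by linarith)
  rw [gFun]
  nlinarith [sq_nonneg (t ^ p - (1 - t) ^ p)]

/-- For every `κ ∈ (0,2)` the second derivative of the Rényi entropy function satisfies
`η_κ'' ≤ −c` on `(0,1)` for some `c > 0`; moreover for `κ ∈ (1,2)` and `p = κ − 1`,
`g_p(t) ≥ (1 − M_p) 2^{1−p} > 0` on `(0,1)`. -/
theorem statement_19 (κ : ℝ) (hκ0 : 0 < κ) (hκ2 : κ < 2) :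
    (∃ c : ℝ, 0 < c ∧ ∀ t ∈ Set.Ioo (0 : ℝ) 1, deriv (deriv (eta κ)) t ≤ -c) ∧
    (1 < κ →
      (0 < (1 - Mconst (κ - 1)) * (2 : ℝ) ^ (1 - (κ - 1)) ∧
       ∀ t ∈ Set.Ioo (0 : ℝ) 1,
         (1 - Mconst (κ - 1)) * (2 : ℝ) ^ (1 - (κ - 1)) ≤ gFun (κ - 1) t)) := by
  have hg (hκ1 : 1 < κ) : 0 < (1 - Mconst (κ - 1)) * (2 : ℝ) ^ (1 - (κ - 1)) ∧
      ∀ t ∈ Ioo (0 : ℝ) 1, (1 - Mconst (κ - 1)) * (2 : ℝ) ^ (1 - (κ - 1)) ≤ gFun (κ - 1) t :=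
    ⟨one_sub_Mconst_mul_pos (by linarith) (by linarith),
      fun t ht => one_sub_Mconst_mul_le_gFun (by linarith) (by linarith) ht⟩
  refine ⟨?_, hg⟩
  rcases lt_trichotomy κ 1 with hκ1 | rfl | hκ1
  · refine ⟨κ / 4, by positivity, fun t ht => deriv_deriv_eta_le hκ0.le hκ1.ne ht hκ0.le ?_⟩
    have hfactor : 0 ≤ κ / (1 - κ) := div_nonneg hκ0.le (by linarith)
    calc κ / (1 - κ) * gFun (κ - 1) t ≤ κ / (1 - κ) * (κ - 1) :=
          mul_le_mul_of_nonneg_left (gFun_le_of_nonpos (by linarith) ht) hfactor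
      _ = -κ := by field_simp; ring
  · exact ⟨4, four_pos, fun t ht => deriv_deriv_eta_one_le ht⟩
  · obtain ⟨hG, hgG⟩ := hg hκ1
    have hκ1' : 0 < κ - 1 := by linarith
    refine ⟨κ / (κ - 1) * ((1 - Mconst (κ - 1)) * 2 ^ (1 - (κ - 1))) / 4, by positivity,
      fun t ht => deriv_deriv_eta_le hκ0.le hκ1.ne' ht (by positivity) ?_⟩
    rw [show κ / (1 - κ) = -(κ / (κ - 1)) by rw [← neg_sub, div_neg], neg_mul, neg_le_neg_iff]
    exact mul_le_mul_of_nonneg_left (hgG t ht) (by positivity)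

end
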